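/- Let A be the K × N matrix of Construction 1′ and let s be a positive integer with s < (1/2)(√K + 1). Then any two vectors x_1, x_2 ∈ ℝ^N each having at most s nonzero entries and satisfying A x_1 = A x_2 must be equal; that is, s-sparse signals are uniquely determined by their measurements under A. -/

import Mathlib

/-!
Because `k ↦ bOf α k` enumerates `F`, the inner product of columns `n ≠ n'` of `A` is
`K⁻¹ ∑_{x ∈ F} ψ(c₁ x + c₂ x²)`, where `ψ = ω_p^{Tr(·)}` and `(c₁, c₂) ≠ 0` is the difference of
the labels `(b₁, b₂)` of the two columns. This sum vanishes when `c₂ = 0` and has modulus `√K`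
otherwise (as `p` is odd), so the unit columns of `A` have coherence at most `1/√K`. Gershgorin's
theorem for the Gram matrix restricted to the support of a nonzero kernel vector then shows that
this support has at least `1 + √K` elements, whereas `x₁ - x₂` has at most `2s < 1 + √K`.
-/

open Complex Finset

/-- The canonical additive character of a finite field `F` of characteristic `p`:
`χ(y) = exp(2πi · Tr(y) / p) = ω_p^{Tr(y)}`, where `Tr : F → F_p` is the field trace. -/
noncomputable def addChar (p : ℕ) {F : Type*} [Field F] [Fintype F] [Algebra (ZMod p) F]
    (y : F) : ℂ :=
  Complex.exp (2 * Real.pi * Complex.I * ((Algebra.trace (ZMod p) F y).val : ℂ) / p)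

/-- `b_i` associated to the digit `u_i`: `b = 0` if `u = 0`, and `b = α^(u-1)` if `u ≥ 1`. -/
noncomputable def bOf {F : Type*} [Field F] (α : F) (u : ℕ) : F :=
  if u = 0 then 0 else α ^ (u - 1)

open scoped ComplexConjugate Matrix

namespace AddChar

variable {F : Type*} [Field F] [Fintype F] {ψ : AddChar F ℂ}

theorem IsPrimitive.norm_sum_quadratic_sq (hψ : ψ.IsPrimitive) (h2 : (2 : F) ≠ 0) (c₁ : F)
    {c₂ : F} (hc₂ : c₂ ≠ 0) :
    ‖∑ x, ψ (c₁ * x + c₂ * x ^ 2)‖ ^ 2 = Fintype.card F := by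
  classical
  -- the difference of the quadratic phase at `d + y` and at `y` is affine in `y` with slope
  -- `2 c₂ d`, so summing over `y` leaves only `d = 0`
  have hshift : ∀ d y : F, ψ (c₁ * (d + y) + c₂ * (d + y) ^ 2) * conj (ψ (c₁ * y + c₂ * y ^ 2)) =
      ψ (c₁ * d + c₂ * d ^ 2) * ψ (y * (2 * c₂ * d)) := by
    intro d y
    rw [← map_neg_eq_conj, ← map_add_eq_mul, ← map_add_eq_mul]
    ring_nf
  apply Complex.ofReal_injective
  push_cast
  calc ((‖∑ x, ψ (c₁ * x + c₂ * x ^ 2)‖ : ℂ) ^ 2)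
      = ∑ y, ∑ d, ψ (c₁ * (d + y) + c₂ * (d + y) ^ 2) * conj (ψ (c₁ * y + c₂ * y ^ 2)) := by
        rw [← Complex.mul_conj', map_sum, sum_mul_sum, sum_comm]
        exact sum_congr rfl fun y _ => (Equiv.sum_comp (Equiv.addRight y)
          (fun x => ψ (c₁ * x + c₂ * x ^ 2) * conj (ψ (c₁ * y + c₂ * y ^ 2)))).symm
    _ = ∑ d, ψ (c₁ * d + c₂ * d ^ 2) * ∑ y, ψ (y * (2 * c₂ * d)) := by
        simp_rw [hshift, mul_sum]
        exact sum_comm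
    _ = Fintype.card F := by simp [sum_mulShift _ hψ, h2, hc₂]

theorem IsPrimitive.norm_sum_quadratic_le (hψ : ψ.IsPrimitive) (h2 : (2 : F) ≠ 0) {c₁ c₂ : F}
    (hc : c₁ ≠ 0 ∨ c₂ ≠ 0) :
    ‖∑ x, ψ (c₁ * x + c₂ * x ^ 2)‖ ≤ √(Fintype.card F) := by
  classical
  rcases eq_or_ne c₂ 0 with rfl | hc₂
  · have hc₁ : c₁ ≠ 0 := hc.resolve_right (not_not.mpr rfl)
    simp_rw [zero_mul, add_zero, mul_comm c₁, sum_mulShift _ hψ, if_neg hc₁, Nat.cast_zero,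
      norm_zero]
    positivity
  · rw [← hψ.norm_sum_quadratic_sq h2 c₁ hc₂, Real.sqrt_sq (norm_nonneg _)]

end AddChar

namespace Matrix

theorem conjTranspose_mul_self_apply_of_eq_addChar {ι n G : Type*} [Fintype ι] [AddCommGroup G]
    [Fintype G] (ψ : AddChar G ℂ) {e : ι → G} (he : e.Bijective) (c : ℝ) (f : n → G → G)
    {A : Matrix ι n ℂ} (hA : ∀ k j, A k j = c * ψ (f j (e k))) (j j' : n) :
    (Aᴴ * A) j j' = c ^ 2 * ∑ x, ψ (f j' x - f j x) := by
  simp_rw [mul_apply, conjTranspose_apply, hA, mul_sum, star_mul', Complex.star_def,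
    Complex.conj_ofReal, ← AddChar.map_neg_eq_conj]
  rw [← he.sum_comp]
  refine sum_congr rfl fun k _ => ?_
  rw [sub_eq_neg_add, AddChar.map_add_eq_mul]
  ring

variable {n : Type*} [Fintype n] [DecidableEq n]

theorem one_add_le_card_support_mul_of_mulVec_eq_zero {K : Type*} [NormedField K] [DecidableEq K]
    {G : Matrix n n K} {μ : ℝ} (hdiag : ∀ i, G i i = 1) (hoff : ∀ i j, i ≠ j → ‖G i j‖ ≤ μ)
    {z : n → K} (hz : G *ᵥ z = 0) (hz0 : z ≠ 0) :
    1 + μ ≤ #{i | z i ≠ 0} * μ := by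
  set T : Finset n := {i | z i ≠ 0}
  have hzT : ∀ i ∉ T, z i = 0 := fun i hi => by simpa [T] using hi
  set v : T → K := fun i => z i
  have hv : G.submatrix ((↑) : T → n) (↑) *ᵥ v = 0 := by
    ext i
    simp only [mulVec, dotProduct, submatrix_apply, v, Pi.zero_apply]
    rw [sum_coe_sort T (fun j => G i j * z j),
      sum_subset (subset_univ T) fun j _ hj => by rw [hzT j hj, mul_zero]]
    exact congrFun hz i
  have hv0 : v ≠ 0 := by
    obtain ⟨i, hi⟩ := Function.ne_iff.mp hz0
    exact Function.ne_iff.mpr ⟨⟨i, by simpa [T] using hi⟩, hi⟩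
  have hker : Module.End.HasEigenvalue (toLin' (G.submatrix ((↑) : T → n) (↑))) 0 :=
    Module.End.hasEigenvalue_of_hasEigenvector
      ⟨Module.End.mem_eigenspace_iff.mpr (by simpa using hv), hv0⟩
  obtain ⟨k, hk⟩ := eigenvalue_mem_ball hker
  have hT : 1 ≤ #T := card_pos.mpr ⟨k, k.2⟩
  have hsum : ∑ j ∈ univ.erase k, ‖G.submatrix ((↑) : T → n) (↑) k j‖ ≤ (#T - 1 : ℕ) * μ := by
    rw [← Fintype.card_coe T, ← card_univ, ← card_erase_of_mem (mem_univ k), ← nsmul_eq_mul]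
    exact sum_le_card_nsmul _ _ _ fun j hj =>
      hoff _ _ fun h => (mem_erase.mp hj).1 (Subtype.ext h).symm
  rw [Metric.mem_closedBall, submatrix_apply, hdiag, dist_zero_left, norm_one] at hk
  push_cast [hT] at hsum
  linarith

theorem eq_of_mulVec_eq_of_coherence {𝕜 m : Type*} [RCLike 𝕜] [DecidableEq 𝕜] [Fintype m]
    {A : Matrix m n 𝕜} {μ : ℝ} (hdiag : ∀ i, (Aᴴ * A) i i = 1)
    (hoff : ∀ i j, i ≠ j → ‖(Aᴴ * A) i j‖ ≤ μ) {x y : n → 𝕜}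
    (hsparse : (#{i | x i ≠ 0} + #{i | y i ≠ 0} : ℕ) * μ < 1 + μ) (h : A *ᵥ x = A *ᵥ y) :
    x = y := by
  by_contra hne
  have hker : (Aᴴ * A) *ᵥ (x - y) = 0 := by
    rw [← mulVec_mulVec, mulVec_sub, h, sub_self, mulVec_zero]
  have hspark :=
    one_add_le_card_support_mul_of_mulVec_eq_zero hdiag hoff hker (sub_ne_zero.mpr hne)
  have hsupp : (#{i | (x - y) i ≠ 0} : ℝ) ≤ #{i | x i ≠ 0} + #{i | y i ≠ 0} := by
    norm_cast
    refine (card_le_card fun i => ?_).trans (card_union_le _ _)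
    simp only [mem_filter, mem_univ, true_and, mem_union, Pi.sub_apply]
    contrapose!
    rintro ⟨hx, hy⟩
    rw [hx, hy, sub_zero]
  have hT : (1 : ℝ) ≤ #{i | (x - y) i ≠ 0} := by
    obtain ⟨i, hi⟩ := Function.ne_iff.mp (sub_ne_zero.mpr hne)
    exact_mod_cast card_pos.mpr ⟨i, by simpa using hi⟩
  push_cast at hsparse
  have hμ : 0 < μ := by nlinarith
  nlinarith [mul_le_mul_of_nonneg_right hsupp hμ.le]

end Matrix

noncomputable def traceAddChar (p : ℕ) [NeZero p] (F : Type*) [Field F] [Fintype F]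
    [Algebra (ZMod p) F] : AddChar F ℂ :=
  ZMod.stdAddChar.compAddMonoidHom (Algebra.trace (ZMod p) F).toAddMonoidHom

section TraceAddChar

variable (p : ℕ) [Fact p.Prime] {F : Type*} [Field F] [Fintype F] [Algebra (ZMod p) F]

theorem traceAddChar_apply (y : F) : traceAddChar p F y = addChar p y := by
  simp [traceAddChar, ZMod.stdAddChar_apply, ZMod.toCircle_apply, addChar]

theorem isPrimitive_traceAddChar : (traceAddChar p F).IsPrimitive := by
  have : FiniteDimensional (ZMod p) F := Module.finite_iff_finite.mpr inferInstance
  refine AddChar.IsPrimitive.of_ne_one (AddChar.ne_one_iff.mpr ?_)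
  obtain ⟨a, ha⟩ := DFunLike.ne_iff.mp (Algebra.trace_ne_zero (ZMod p) F)
  refine ⟨a, fun h => ha ?_⟩
  rw [← (traceAddChar p F).map_zero_eq_one] at h
  simpa using ZMod.injective_stdAddChar h

end TraceAddChar

theorem bijective_bOf {F : Type*} [Field F] [Fintype F] {K : ℕ} (hK : Fintype.card F = K)
    {α : F} (hα : ∀ x : F, x ≠ 0 → ∃ j : ℕ, α ^ j = x) :
    Function.Bijective fun k : Fin K => bOf α k := by
  subst hK
  refine (Fintype.bijective_iff_surjective_and_card _).mpr ⟨fun x => ?_, Fintype.card_fin _⟩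
  have hK : 1 < Fintype.card F := Fintype.one_lt_card
  rcases eq_or_ne x 0 with rfl | hx
  · exact ⟨⟨0, by omega⟩, if_pos rfl⟩
  obtain ⟨j, rfl⟩ := hα x hx
  have hj : j % (Fintype.card F - 1) < Fintype.card F - 1 := Nat.mod_lt j (by omega)
  refine ⟨⟨j % (Fintype.card F - 1) + 1, by omega⟩, ?_⟩
  simp only [bOf, Nat.add_sub_cancel, Nat.add_one_ne_zero, if_false]
  rcases eq_or_ne α 0 with rfl | hα0
  · obtain rfl : j = 0 := by by_contra hj0; exact hx (zero_pow hj0)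
    simp
  · conv_rhs => rw [← Nat.div_add_mod j (Fintype.card F - 1), pow_add, pow_mul,
      FiniteField.pow_card_sub_one_eq_one α hα0, one_pow, one_mul]

/-- The pair `(b₁, b₂)` attached to the column index `n = u₁ + u₂ K`. -/
noncomputable def columnLabel {F : Type*} [Field F] (α : F) (K n : ℕ) : F × F :=
  (bOf α (n % K), bOf α (n / K))

theorem injective_columnLabel {F : Type*} [Field F] {α : F} {K : ℕ}
    (hα : Function.Injective fun k : Fin K => bOf α k) :
    Function.Injective fun n : Fin (K ^ 2) => columnLabel α K n := by
  intro n n' h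
  have hK : 0 < K := Nat.pos_of_ne_zero fun hK => by simpa [hK] using n.2
  have hdiv : ∀ n : Fin (K ^ 2), (n : ℕ) / K < K := fun n =>
    Nat.div_lt_of_lt_mul (by simpa [sq] using n.2)
  have hmod : (n : ℕ) % K = n' % K := congrArg Fin.val
    (hα (a₁ := ⟨n % K, Nat.mod_lt _ hK⟩) (a₂ := ⟨n' % K, Nat.mod_lt _ hK⟩) (Prod.ext_iff.mp h).1)
  have hquot : (n : ℕ) / K = n' / K := congrArg Fin.val
    (hα (a₁ := ⟨n / K, hdiv n⟩) (a₂ := ⟨n' / K, hdiv n'⟩) (Prod.ext_iff.mp h).2)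
  ext
  rw [← Nat.div_add_mod n K, ← Nat.div_add_mod n' K, hmod, hquot]

section Construction

variable (p : ℕ) {F : Type*} [Field F] [Fintype F] [Algebra (ZMod p) F] (α : F) (K : ℕ)

/-- Construction 1′ with every row written uniformly: row `k` evaluates
`x ↦ ω_p^{Tr(b₁ x + b₂ x²)}` at `x = bOf α k`, which is `0` for the constant row `k = 0`. -/
noncomputable def construction1Matrix : Matrix (Fin K) (Fin (K ^ 2)) ℂ :=
  .of fun k n => ((√K)⁻¹ : ℝ) *
    addChar p ((columnLabel α K n).1 * bOf α k + (columnLabel α K n).2 * bOf α k ^ 2)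

variable {p α K}

theorem eq_construction1Matrix {A : Matrix (Fin K) (Fin (K ^ 2)) ℂ}
    (hA : ∀ (k : Fin K) (n : Fin (K ^ 2)), A k n =
      if (k : ℕ) = 0 then ((Real.sqrt K : ℂ))⁻¹
      else ((Real.sqrt K : ℂ))⁻¹ * addChar p (bOf α ((n : ℕ) % K) * α ^ ((k : ℕ) - 1) +
        bOf α ((n : ℕ) / K) * α ^ (2 * ((k : ℕ) - 1)))) :
    A = construction1Matrix p α K := by
  ext k n
  rw [hA, construction1Matrix, Matrix.of_apply, ofReal_inv]
  by_cases hk : (k : ℕ) = 0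
  · simp [hk, bOf, addChar]
  · rw [if_neg hk, show bOf α k = α ^ ((k : ℕ) - 1) from if_neg hk, ← pow_mul, mul_comm _ 2,
      columnLabel]

variable [Fact p.Prime] (hK : Fintype.card F = K) (hα : ∀ x : F, x ≠ 0 → ∃ j : ℕ, α ^ j = x)
include hK hα

theorem conjTranspose_mul_self_construction1Matrix_apply (n n' : Fin (K ^ 2)) :
    ((construction1Matrix p α K)ᴴ * construction1Matrix p α K) n n' =
      ((√K)⁻¹ : ℝ) ^ 2 * ∑ x, traceAddChar p F
        ((columnLabel α K n' - columnLabel α K n).1 * x +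
          (columnLabel α K n' - columnLabel α K n).2 * x ^ 2) := by
  rw [Matrix.conjTranspose_mul_self_apply_of_eq_addChar (A := construction1Matrix p α K)
    (traceAddChar p F) (bijective_bOf hK hα) _
    (fun (n : Fin (K ^ 2)) x => (columnLabel α K n).1 * x + (columnLabel α K n).2 * x ^ 2)
    fun k n => by rw [construction1Matrix, Matrix.of_apply, traceAddChar_apply]]
  congr! 3 with x
  simp only [Prod.fst_sub, Prod.snd_sub]
  ring

theorem conjTranspose_mul_self_construction1Matrix_apply_self (n : Fin (K ^ 2)) :
    ((construction1Matrix p α K)ᴴ * construction1Matrix p α K) n n = 1 := by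
  have hK0 : (K : ℂ) ≠ 0 := by simp [← hK, Fintype.card_ne_zero]
  simp only [conjTranspose_mul_self_construction1Matrix_apply hK hα, sub_self, Prod.fst_zero,
    Prod.snd_zero, zero_mul, add_zero, AddChar.map_zero_eq_one, sum_const, card_univ, hK,
    nsmul_eq_mul, mul_one]
  rw [← ofReal_pow, inv_pow, Real.sq_sqrt (Nat.cast_nonneg K), ofReal_inv, ofReal_natCast,
    inv_mul_cancel₀ hK0]

theorem norm_conjTranspose_mul_self_construction1Matrix_apply_le (h2 : (2 : F) ≠ 0)
    {n n' : Fin (K ^ 2)} (hnn' : n ≠ n') :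
    ‖((construction1Matrix p α K)ᴴ * construction1Matrix p α K) n n'‖ ≤ (√K)⁻¹ := by
  have hKpos : 0 < √(K : ℝ) := Real.sqrt_pos.mpr (by simp [← hK, Fintype.card_pos])
  have hc : (columnLabel α K n' - columnLabel α K n).1 ≠ 0 ∨
      (columnLabel α K n' - columnLabel α K n).2 ≠ 0 := by
    by_contra! h
    exact hnn' (injective_columnLabel (bijective_bOf hK hα).1
      (sub_eq_zero.mp (Prod.ext h.1 h.2))).symm
  have hsum := (isPrimitive_traceAddChar p).norm_sum_quadratic_le h2 hc
  rw [hK] at hsum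
  calc _ ≤ ((√K)⁻¹) ^ 2 * √K := by
        rw [conjTranspose_mul_self_construction1Matrix_apply hK hα, norm_mul, ← ofReal_pow,
          norm_real, Real.norm_of_nonneg (by positivity)]
        gcongr
    _ = (√K)⁻¹ := by rw [sq, mul_assoc, inv_mul_cancel₀ hKpos.ne', mul_one]

end Construction

theorem construction1prime_sparse_recovery_general
    (p m : ℕ) [Fact p.Prime] (hodd : Odd p)
    (K N : ℕ) (hK : K = p ^ m) (hN : N = K ^ 2)
    (F : Type*) [Field F] [Fintype F] [Algebra (ZMod p) F]
    (hcard : Fintype.card F = p ^ m)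
    (α : F) (hα : ∀ x : F, x ≠ 0 → ∃ j : ℕ, α ^ j = x)
    (A : Matrix (Fin K) (Fin N) ℂ)
    (hA : ∀ (k : Fin K) (n : Fin N), A k n =
      if (k : ℕ) = 0 then ((Real.sqrt K : ℂ))⁻¹
      else ((Real.sqrt K : ℂ))⁻¹ * addChar p (bOf α ((n : ℕ) % K) * α ^ ((k : ℕ) - 1) +
        bOf α ((n : ℕ) / K) * α ^ (2 * ((k : ℕ) - 1))))
    (s : ℕ) (hsbound : (s : ℝ) < (1 / 2) * (Real.sqrt K + 1))
    (x₁ x₂ : Fin N → ℝ)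
    (hx₁ : (Finset.univ.filter fun n => x₁ n ≠ 0).card ≤ s)
    (hx₂ : (Finset.univ.filter fun n => x₂ n ≠ 0).card ≤ s)
    (hAx : A.mulVec (fun n => (x₁ n : ℂ)) = A.mulVec (fun n => (x₂ n : ℂ))) :
    x₁ = x₂ := by
  subst hN
  obtain rfl := eq_construction1Matrix hA
  have hF : Fintype.card F = K := hcard.trans hK.symm
  have : CharP F p := charP_of_injective_algebraMap (algebraMap (ZMod p) F).injective p
  have h2 : (2 : F) ≠ 0 := Ring.two_ne_zero (by
    rw [ringChar.eq F p]; rintro rfl; exact Nat.not_odd_iff_even.mpr even_two hodd)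
  have hKpos : 0 < √(K : ℝ) := Real.sqrt_pos.mpr (by simp [← hF, Fintype.card_pos])
  have hcast : ∀ x : Fin (K ^ 2) → ℝ, #{n | (x n : ℂ) ≠ 0} = #{n | x n ≠ 0} := fun x => by simp
  have hs : ((#{n | (x₁ n : ℂ) ≠ 0} + #{n | (x₂ n : ℂ) ≠ 0} : ℕ) : ℝ) ≤ 2 * s := by
    rw [hcast, hcast]; exact_mod_cast (add_le_add hx₁ hx₂).trans (two_mul s).ge
  funext n
  refine ofReal_injective (congrFun (Matrix.eq_of_mulVec_eq_of_coherence
    (conjTranspose_mul_self_construction1Matrix_apply_self hF hα)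
    (fun _ _ => norm_conjTranspose_mul_self_construction1Matrix_apply_le hF hα h2) ?_ hAx) n)
  calc _ ≤ 2 * s * (√K)⁻¹ := by gcongr
    _ < (√K + 1) * (√K)⁻¹ := by gcongr; linarith
    _ = 1 + (√K)⁻¹ := by rw [add_mul, mul_inv_cancel₀ hKpos.ne', one_mul]

/-- For the Construction 1′ matrix `A`, if `s < (1/2)(√K + 1)` then `s`-sparse real
signals are uniquely determined by their measurements under `A`. -/
theorem construction1prime_sparse_recovery
    (p m : ℕ) [Fact p.Prime] (hodd : Odd p) (hm : 0 < m)
    (K N : ℕ) (hK : K = p ^ m) (hN : N = K ^ 2)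
    (F : Type*) [Field F] [Fintype F] [Algebra (ZMod p) F]
    (hcard : Fintype.card F = p ^ m)
    (α : F) (hα : ∀ x : F, x ≠ 0 → ∃ j : ℕ, α ^ j = x)
    (A : Matrix (Fin K) (Fin N) ℂ)
    (hA : ∀ (k : Fin K) (n : Fin N), A k n =
      if (k : ℕ) = 0 then ((Real.sqrt K : ℂ))⁻¹
      else ((Real.sqrt K : ℂ))⁻¹ * addChar p (bOf α ((n : ℕ) % K) * α ^ ((k : ℕ) - 1) +
        bOf α ((n : ℕ) / K) * α ^ (2 * ((k : ℕ) - 1))))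
    (s : ℕ) (hs : 0 < s) (hsbound : (s : ℝ) < (1 / 2) * (Real.sqrt K + 1))
    (x₁ x₂ : Fin N → ℝ)
    (hx₁ : (Finset.univ.filter fun n => x₁ n ≠ 0).card ≤ s)
    (hx₂ : (Finset.univ.filter fun n => x₂ n ≠ 0).card ≤ s)
    (hAx : A.mulVec (fun n => (x₁ n : ℂ)) = A.mulVec (fun n => (x₂ n : ℂ))) :
    x₁ = x₂ :=
  construction1prime_sparse_recovery_general p m hodd K N hK hN F hcard α hα A hA s hsbound x₁ x₂
    hx₁ hx₂ hAx
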